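/- arXiv:2602.12449 — 5 statements merged into one kernel-verified Lean document; each statement's English description precedes it below -/
import Mathlib

section
/- For all real x, e^{-x} - 1 + x ≥ x²/(2 + |x|), with equality at x = 0. -/
/-!
Clearing the denominator, for `x ≥ 0` the bound becomes `2 - x ≤ (2 + x) e^{-x}`, which is trivial
for `x ≥ 2` and otherwise says `x ≤ log ((1 + t) / (1 - t))` with `t = x / 2`: the first term of the
odd power series of that logarithm. For `x = -t < 0` it follows from `e^t ≥ 1 + t + t² / 2` and
`t² / (2 + t) ≤ t² / 2`.
-/

open Real

lemma two_mul_le_log_one_add_sub_log_one_sub {t : ℝ} (ht₀ : 0 ≤ t) (ht₁ : t < 1) :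
    2 * t ≤ log (1 + t) - log (1 - t) := by
  have hsum := hasSum_log_sub_log_of_abs_lt_one (abs_lt.mpr ⟨by linarith, ht₁⟩)
  simpa using le_hasSum hsum 0 fun k _ => by positivity

lemma two_sub_le_two_add_mul_exp_neg {x : ℝ} (hx : 0 ≤ x) : 2 - x ≤ (2 + x) * exp (-x) := by
  rcases le_or_gt 2 x with h2 | h2
  · nlinarith [exp_pos (-x)]
  have hlog := two_mul_le_log_one_add_sub_log_one_sub (t := x / 2) (by positivity) (by linarith)
  have hratio : (1 + x / 2) / (1 - x / 2) = (2 + x) / (2 - x) := by field_simp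
  rw [← log_div (by linarith) (by linarith), hratio,
    le_log_iff_exp_le (div_pos (by linarith) (by linarith)), mul_div_cancel₀ x two_ne_zero,
    le_div_iff₀ (by linarith)] at hlog
  rw [exp_neg, ← div_eq_mul_inv, le_div_iff₀ (exp_pos x)]
  linarith

lemma sq_div_two_add_le_exp_neg_sub_one_add_of_nonneg {x : ℝ} (hx : 0 ≤ x) :
    x ^ 2 / (2 + x) ≤ exp (-x) - 1 + x := by
  rw [div_le_iff₀ (by linarith)]
  nlinarith [two_sub_le_two_add_mul_exp_neg hx]

lemma sq_div_two_add_le_exp_sub_one_sub_of_nonneg {t : ℝ} (ht : 0 ≤ t) :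
    t ^ 2 / (2 + t) ≤ exp t - 1 - t :=
  calc t ^ 2 / (2 + t) ≤ t ^ 2 / 2 :=
        div_le_div_of_nonneg_left (by positivity) (by norm_num) (by linarith)
    _ ≤ exp t - 1 - t := by linarith [quadratic_le_exp_of_nonneg ht]

/-- `g x := e^{-x} - 1 + x` satisfies `g x ≥ x² / (2 + |x|)` for all real `x`,
with equality at `x = 0`. -/
theorem g_lower_bound :
    (∀ x : ℝ, Real.exp (-x) - 1 + x ≥ x ^ 2 / (2 + |x|)) ∧
    Real.exp (-(0 : ℝ)) - 1 + 0 = (0 : ℝ) ^ 2 / (2 + |(0 : ℝ)|) := by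
  refine ⟨fun x => ?_, by norm_num⟩
  rcases le_total 0 x with hx | hx
  · rw [abs_of_nonneg hx]
    exact sq_div_two_add_le_exp_neg_sub_one_add_of_nonneg hx
  · rw [abs_of_nonpos hx, ← neg_sq, ge_iff_le]
    have := sq_div_two_add_le_exp_sub_one_sub_of_nonneg (neg_nonneg.mpr hx)
    linarith
end

section
/- For every γ > 0 and nonnegative integer d with d + 1 > γ, the maximum over x ∈ [-γ, γ] of |e^{-x} - Σ_{k=0}^{d} (-x)^k/k!| is at most (eγ/(d+1))^{d+1}. -/
/-!
Expanding `e^{-x}` in its power series, the Taylor error is dominated termwise by the tail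
`∑_{k > d} |x|^k / k!` of the series of `e^{|x|}`, which is `e^{|x|}` times a Poisson tail
probability. For `t ≤ n` the Chernoff bound `t^k ≤ (t/n)^n n^k` (`k ≥ n`) compares that tail
with the full series of `e^n`, giving `(e t / n)^n`.
-/

open Finset Nat

namespace Real

theorem hasSum_pow_div_factorial (x : ℝ) : HasSum (fun k ↦ x ^ k / k !) (exp x) := by
  rw [exp_eq_exp_ℝ]
  exact NormedSpace.expSeries_div_hasSum_exp x

theorem hasSum_exp_sub_sum_range (x : ℝ) (n : ℕ) :
    HasSum (fun k ↦ x ^ (k + n) / (k + n)!) (exp x - ∑ k ∈ range n, x ^ k / k !) :=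
  (hasSum_nat_add_iff' n).2 (hasSum_pow_div_factorial x)

theorem abs_exp_sub_sum_range_le (x : ℝ) (n : ℕ) :
    |exp x - ∑ k ∈ range n, x ^ k / k !| ≤ exp |x| - ∑ k ∈ range n, |x| ^ k / k ! :=
  (hasSum_exp_sub_sum_range x n).norm_le_of_bounded (hasSum_exp_sub_sum_range |x| n)
    fun k ↦ by simp

theorem pow_add_le_div_pow_mul_pow {t : ℝ} {n : ℕ} (ht : 0 ≤ t) (htn : t ≤ n) (k : ℕ) :
    t ^ (k + n) ≤ (t / n) ^ n * (n : ℝ) ^ (k + n) := by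
  rcases eq_or_ne n 0 with rfl | hn
  · obtain rfl : t = 0 := le_antisymm (by simpa using htn) ht
    simp
  calc t ^ (k + n) = t ^ k * t ^ n := pow_add t k n
    _ ≤ (n : ℝ) ^ k * t ^ n := by gcongr
    _ = (t / n) ^ n * (n : ℝ) ^ (k + n) := by
      rw [div_pow, pow_add, div_mul_eq_mul_div, mul_div_assoc, mul_div_cancel_right₀ _
        (pow_ne_zero n (cast_ne_zero.2 hn))]
      ring

theorem exp_sub_sum_range_le {t : ℝ} {n : ℕ} (ht : 0 ≤ t) (htn : t ≤ n) :
    exp t - ∑ k ∈ range n, t ^ k / k ! ≤ (exp 1 * t / n) ^ n := by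
  have hhead : 0 ≤ ∑ k ∈ range n, (n : ℝ) ^ k / k ! := sum_nonneg fun k _ ↦ by positivity
  calc exp t - ∑ k ∈ range n, t ^ k / k !
      ≤ (t / n) ^ n * (exp n - ∑ k ∈ range n, (n : ℝ) ^ k / k !) :=
        hasSum_le
          (fun k ↦ by rw [← mul_div_assoc]; gcongr; exact pow_add_le_div_pow_mul_pow ht htn k)
          (hasSum_exp_sub_sum_range t n) ((hasSum_exp_sub_sum_range n n).mul_left _)
    _ ≤ (t / n) ^ n * exp n := by gcongr; linarith
    _ = (exp 1 * t / n) ^ n := by rw [← exp_one_pow, mul_div_assoc, mul_pow]; ring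

end Real

theorem taylor_err_le_general (γ : ℝ) (d : ℕ) (hd : (d : ℝ) + 1 > γ) :
    ∀ x ∈ Set.Icc (-γ) γ,
      |Real.exp (-x) - ∑ k ∈ Finset.range (d + 1), (-x) ^ k / (Nat.factorial k)|
        ≤ (Real.exp 1 * γ / ((d : ℝ) + 1)) ^ (d + 1) := by
  intro x ⟨hxl, hxr⟩
  have hxγ : |x| ≤ γ := abs_le.2 ⟨by linarith, hxr⟩
  have hxd : |-x| ≤ ((d + 1 : ℕ) : ℝ) := by push_cast; rw [abs_neg]; linarith
  calc |Real.exp (-x) - ∑ k ∈ range (d + 1), (-x) ^ k / k !|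
      ≤ Real.exp |-x| - ∑ k ∈ range (d + 1), |-x| ^ k / k ! :=
        Real.abs_exp_sub_sum_range_le _ _
    _ ≤ (Real.exp 1 * |-x| / ((d + 1 : ℕ) : ℝ)) ^ (d + 1) :=
        Real.exp_sub_sum_range_le (abs_nonneg _) hxd
    _ ≤ (Real.exp 1 * γ / ((d : ℝ) + 1)) ^ (d + 1) := by rw [abs_neg]; push_cast; gcongr

/-- For `d + 1 > γ > 0`, the degree-`d` Taylor approximation error of `e^{-x}` on
`[-γ, γ]` is at most `(eγ/(d+1))^{d+1}`. -/
theorem taylor_err_le (γ : ℝ) (hγ : 0 < γ) (d : ℕ) (hd : (d : ℝ) + 1 > γ) :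
    ∀ x ∈ Set.Icc (-γ) γ,
      |Real.exp (-x) - ∑ k ∈ Finset.range (d + 1), (-x) ^ k / (Nat.factorial k)|
        ≤ (Real.exp 1 * γ / ((d : ℝ) + 1)) ^ (d + 1) :=
  taylor_err_le_general γ d hd
end

section
/- Let C := log(8γ/ε) with ε < 8γ, and suppose d + 1 ≥ C / W(C/(γe)) where W is the principal branch of the Lambert W function and γ > 0. Then (eγ/(d+1))^{d+1} ≤ ε/(8γ), i.e., the degree-d Taylor polynomial of e^{-x} approximates e^{-x} on [-γ,γ] with error at most ε/(8γ). -/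
open Real Finset

/-- `e * n^n ≤ (e-1) * e^n * n!` for `n ≥ 1`. -/
lemma aux_factorial_lb : ∀ n : ℕ, 1 ≤ n →
    Real.exp 1 * (n : ℝ) ^ n ≤ (Real.exp 1 - 1) * (Real.exp 1) ^ n * (n.factorial : ℝ) := by
  intro n hn
  induction n with
  | zero => omega
  | succ m ih =>
    rcases Nat.eq_zero_or_pos m with hm | hm
    · subst hm
      have he : (2 : ℝ) ≤ Real.exp 1 := by
        have := Real.add_one_le_exp (1 : ℝ)
        linarith
      norm_num [Nat.factorial]
      nlinarith
    · have ih' := ih hm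
      have hm0 : (0 : ℝ) < m := by exact_mod_cast hm
      -- (1 + 1/m)^m ≤ e, i.e. (m+1)^m ≤ e * m^m
      have hkey : ((m : ℝ) + 1) ^ m ≤ Real.exp 1 * (m : ℝ) ^ m := by
        have h1 : (m : ℝ) + 1 ≤ (m : ℝ) * Real.exp (1 / m) := by
          have := Real.add_one_le_exp (1 / (m : ℝ))
          calc (m : ℝ) + 1 = (m : ℝ) * (1 / m + 1) := by field_simp; ring
            _ ≤ (m : ℝ) * Real.exp (1 / m) := by
                apply mul_le_mul_of_nonneg_left this hm0.le
        calc ((m : ℝ) + 1) ^ m ≤ ((m : ℝ) * Real.exp (1 / m)) ^ m := by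
              apply pow_le_pow_left₀ (by positivity) h1
          _ = (m : ℝ) ^ m * Real.exp (1 / m) ^ m := mul_pow _ _ _
          _ = (m : ℝ) ^ m * Real.exp 1 := by
              rw [← Real.exp_nat_mul]
              congr 2
              field_simp
          _ = Real.exp 1 * (m : ℝ) ^ m := mul_comm _ _
      have hep : (0 : ℝ) < Real.exp 1 := Real.exp_pos 1
      push_cast [Nat.factorial_succ, pow_succ]
      push_cast at ih'
      calc Real.exp 1 * (((m : ℝ) + 1) ^ m * ((m : ℝ) + 1))
          ≤ Real.exp 1 * (Real.exp 1 * (m : ℝ) ^ m * ((m : ℝ) + 1)) :=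
            mul_le_mul_of_nonneg_left
              (mul_le_mul_of_nonneg_right hkey (by positivity)) hep.le
        _ = ((m : ℝ) + 1) * Real.exp 1 * (Real.exp 1 * (m : ℝ) ^ m) := by ring
        _ ≤ ((m : ℝ) + 1) * Real.exp 1 * ((Real.exp 1 - 1) * Real.exp 1 ^ m * (m.factorial : ℝ)) :=
            mul_le_mul_of_nonneg_left ih' (by positivity)
        _ = (Real.exp 1 - 1) * (Real.exp 1 ^ m * Real.exp 1) * (((m : ℝ) + 1) * (m.factorial : ℝ)) := by
            ring

set_option maxHeartbeats 1600000 in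
/-- Let `C = log(8γ/ε)` with `0 < ε < 8γ`, and let `W > 0` be the principal-branch
Lambert-W value at `C/(γe)`, i.e. `W * e^W = C/(γe)`.  If `d + 1 ≥ C / W`, then the
degree-`d` Taylor polynomial of `e^{-x}` approximates it on `[-γ,γ]` with error at most
`ε/(8γ)`; in particular `(eγ/(d+1))^{d+1} ≤ ε/(8γ)`. -/
theorem degree_choice_poly_error (γ ε : ℝ) (hγ : 0 < γ) (hε : 0 < ε) (hεγ : ε < 8 * γ)
    (W : ℝ) (hW : 0 < W)
    (hWdef : W * Real.exp W = Real.log (8 * γ / ε) / (γ * Real.exp 1))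
    (d : ℕ) (hd : (d : ℝ) + 1 ≥ Real.log (8 * γ / ε) / W) :
    (Real.exp 1 * γ / ((d : ℝ) + 1)) ^ (d + 1) ≤ ε / (8 * γ) ∧
    ∀ x ∈ Set.Icc (-γ) γ,
      |Real.exp (-x) - ∑ k ∈ Finset.range (d + 1), (-x) ^ k / (Nat.factorial k)|
        ≤ ε / (8 * γ) := by
  set C := Real.log (8 * γ / ε) with hCdef
  set n : ℝ := (d : ℝ) + 1 with hndef
  have hep : (0 : ℝ) < Real.exp 1 := Real.exp_pos 1
  have hn0 : (0 : ℝ) < n := by positivity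
  have hratio : (1 : ℝ) < 8 * γ / ε := (one_lt_div hε).2 hεγ
  have hC : 0 < C := Real.log_pos hratio
  -- C = γ * e * W * e^W
  have hCeq : C = γ * Real.exp 1 * (W * Real.exp W) := by
    rw [hWdef]; field_simp
  have hnW : C ≤ n * W := (div_le_iff₀ hW).1 hd
  -- n ≥ γ * e * e^W
  have hnlb : γ * Real.exp 1 * Real.exp W ≤ n := by
    have : C / W = γ * Real.exp 1 * Real.exp W := by
      rw [hCeq]; field_simp
    linarith [hd, this ▸ hd]
  have hW1 : (1 : ℝ) ≤ Real.exp W := Real.one_le_exp hW.le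
  have hneγ : Real.exp 1 * γ ≤ n := by nlinarith
  -- exp(-C) = ε/(8γ)
  have hexpC : Real.exp (-C) = ε / (8 * γ) := by
    rw [Real.exp_neg, hCdef, Real.exp_log (by positivity)]
    rw [inv_div]
  -- Part 1
  have part1 : (Real.exp 1 * γ / n) ^ (d + 1) ≤ ε / (8 * γ) := by
    have hbase : Real.exp 1 * γ / n ≤ Real.exp (-W) := by
      rw [Real.exp_neg, div_le_iff₀ hn0, inv_mul_eq_div, le_div_iff₀ (Real.exp_pos W)]
      calc Real.exp 1 * γ * Real.exp W = γ * Real.exp 1 * Real.exp W := by ring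
        _ ≤ n := hnlb
    have hbase0 : 0 < Real.exp 1 * γ / n := by positivity
    calc (Real.exp 1 * γ / n) ^ (d + 1) ≤ Real.exp (-W) ^ (d + 1) :=
          pow_le_pow_left₀ hbase0.le hbase _
      _ = Real.exp (-(n * W)) := by
          rw [← Real.exp_nat_mul]
          congr 1
          push_cast [hndef]
          ring
      _ ≤ Real.exp (-C) := Real.exp_le_exp.2 (by linarith)
      _ = ε / (8 * γ) := hexpC
  refine ⟨part1, ?_⟩
  -- Part 2
  intro x hx
  set y : ℝ := -x with hy
  have hyabs : |y| ≤ γ := by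
    rw [abs_le]
    constructor <;> simp only [hy] <;> linarith [hx.1, hx.2]
  -- exp y is the tsum
  have hsum : Summable (fun k : ℕ => y ^ k / k.factorial : ℕ → ℝ) :=
    Real.summable_pow_div_factorial y
  have hexp_tsum : Real.exp y = ∑' k : ℕ, y ^ k / k.factorial := by
    rw [Real.exp_eq_exp_ℝ, NormedSpace.exp_eq_tsum_div]
  have htail : Real.exp y - ∑ k ∈ Finset.range (d + 1), y ^ k / k.factorial
      = ∑' k : ℕ, y ^ (k + (d + 1)) / (k + (d + 1)).factorial := by
    have h := Summable.sum_add_tsum_nat_add (d + 1) hsum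
    rw [hexp_tsum, ← h]
    ring
  set r : ℝ := γ / (n + 1) with hr
  have hr0 : 0 ≤ r := by positivity
  have hr1 : r < 1 := by
    rw [hr, div_lt_one (by positivity)]
    nlinarith [Real.add_one_le_exp (1:ℝ)]
  -- termwise bound
  have hterm : ∀ k : ℕ, |y ^ (k + (d + 1)) / (k + (d + 1)).factorial|
      ≤ γ ^ (d + 1) / (d + 1).factorial * r ^ k := by
    intro k
    rw [abs_div, abs_pow, Nat.abs_cast]
    have hfact : ((d + 1).factorial : ℝ) * ((n + 1)) ^ k ≤ ((k + (d + 1)).factorial : ℝ) := by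
      have h2 : Nat.factorial (d + 1) * (d + 1 + 1) ^ k ≤ Nat.factorial (d + 1 + k) :=
        Nat.factorial_mul_pow_le_factorial
      calc ((d + 1).factorial : ℝ) * (n + 1) ^ k
          = ((Nat.factorial (d + 1) * (d + 1 + 1) ^ k : ℕ) : ℝ) := by push_cast [hndef]; ring
        _ ≤ ((Nat.factorial (d + 1 + k) : ℕ) : ℝ) := by exact_mod_cast h2
        _ = ((k + (d + 1)).factorial : ℝ) := by rw [add_comm]
    calc |y| ^ (k + (d + 1)) / ((k + (d + 1)).factorial : ℝ)
        ≤ γ ^ (k + (d + 1)) / (((d + 1).factorial : ℝ) * (n + 1) ^ k) := by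
          apply div_le_div₀ (by positivity) (pow_le_pow_left₀ (abs_nonneg y) hyabs _)
            (by positivity) hfact
      _ = γ ^ (d + 1) / (d + 1).factorial * r ^ k := by
          rw [pow_add, hr, div_pow]
          field_simp
  have hgeom : Summable (fun k : ℕ => γ ^ (d + 1) / (d + 1).factorial * r ^ k) :=
    (summable_geometric_of_lt_one hr0 hr1).mul_left _
  have hshift : Summable (fun k : ℕ => y ^ (k + (d + 1)) / (k + (d + 1)).factorial) :=
    (summable_nat_add_iff (d + 1)).2 hsum
  have habs : |∑' k : ℕ, y ^ (k + (d + 1)) / (k + (d + 1)).factorial|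
      ≤ γ ^ (d + 1) / (d + 1).factorial * (1 - r)⁻¹ := by
    calc |∑' k : ℕ, y ^ (k + (d + 1)) / (k + (d + 1)).factorial|
        ≤ ∑' k : ℕ, |y ^ (k + (d + 1)) / (k + (d + 1)).factorial| := by
          have h1 : Summable (fun k : ℕ => ‖y ^ (k + (d + 1)) / ((k + (d + 1)).factorial : ℝ)‖) := by
            simpa only [Real.norm_eq_abs] using hshift.abs
          simpa only [Real.norm_eq_abs] using norm_tsum_le_tsum_norm h1
      _ ≤ ∑' k : ℕ, γ ^ (d + 1) / (d + 1).factorial * r ^ k :=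
          Summable.tsum_le_tsum hterm hshift.abs hgeom
      _ = γ ^ (d + 1) / (d + 1).factorial * (1 - r)⁻¹ := by
          rw [tsum_mul_left, tsum_geometric_of_lt_one hr0 hr1]
  -- the key middle inequality
  have hre : r ≤ (Real.exp 1)⁻¹ := by
    rw [hr, div_le_iff₀ (by positivity : (0:ℝ) < n + 1)]
    calc γ = (Real.exp 1)⁻¹ * (Real.exp 1 * γ) := by field_simp
      _ ≤ (Real.exp 1)⁻¹ * (n + 1) :=
          mul_le_mul_of_nonneg_left (by linarith) (by positivity)
  have he1 : (1:ℝ) < Real.exp 1 := by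
    have := Real.add_one_le_exp (1:ℝ); linarith
  have h1r : (1 - (Real.exp 1)⁻¹) ≤ 1 - r := by linarith
  have h1rpos : 0 < 1 - (Real.exp 1)⁻¹ := by
    rw [sub_pos, inv_lt_one_iff₀]; right; exact he1
  have hinv : (1 - r)⁻¹ ≤ Real.exp 1 / (Real.exp 1 - 1) := by
    have : (1 - r)⁻¹ ≤ (1 - (Real.exp 1)⁻¹)⁻¹ :=
      inv_anti₀ (by linarith) h1r
    calc (1 - r)⁻¹ ≤ (1 - (Real.exp 1)⁻¹)⁻¹ := this
      _ = Real.exp 1 / (Real.exp 1 - 1) := by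
          have h : (1 : ℝ) - (Real.exp 1)⁻¹ = (Real.exp 1 - 1) / Real.exp 1 := by
            field_simp
          rw [h, inv_div]
  have haux := aux_factorial_lb (d + 1) (Nat.le_add_left 1 d)
  have hcast : ((d + 1 : ℕ) : ℝ) = n := by push_cast [hndef]; ring
  rw [hcast] at haux
  have hmid : γ ^ (d + 1) / (d + 1).factorial * (1 - r)⁻¹
      ≤ (Real.exp 1 * γ / n) ^ (d + 1) := by
    have hfp : (0:ℝ) < ((d + 1).factorial : ℝ) := by positivity
    calc γ ^ (d + 1) / (d + 1).factorial * (1 - r)⁻¹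
        ≤ γ ^ (d + 1) / (d + 1).factorial * (Real.exp 1 / (Real.exp 1 - 1)) := by
          apply mul_le_mul_of_nonneg_left hinv (by positivity)
      _ = γ ^ (d + 1) * Real.exp 1 / (((d + 1).factorial : ℝ) * (Real.exp 1 - 1)) := by
          field_simp
      _ ≤ Real.exp 1 ^ (d + 1) * γ ^ (d + 1) / n ^ (d + 1) := by
          rw [div_le_div_iff₀ (mul_pos hfp (by linarith)) (pow_pos hn0 _)]
          have : γ ^ (d + 1) * (Real.exp 1 * n ^ (d + 1))
              ≤ γ ^ (d + 1) * ((Real.exp 1 - 1) * Real.exp 1 ^ (d + 1) * ((d + 1).factorial : ℝ)) :=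
            mul_le_mul_of_nonneg_left haux (by positivity)
          nlinarith [this]
      _ = (Real.exp 1 * γ / n) ^ (d + 1) := by
          rw [div_pow, mul_pow]
  calc |Real.exp y - ∑ k ∈ Finset.range (d + 1), y ^ k / (Nat.factorial k)|
      = |∑' k : ℕ, y ^ (k + (d + 1)) / (k + (d + 1)).factorial| := by rw [htail]
    _ ≤ γ ^ (d + 1) / (d + 1).factorial * (1 - r)⁻¹ := habs
    _ ≤ (Real.exp 1 * γ / n) ^ (d + 1) := hmid
    _ ≤ ε / (8 * γ) := part1
end

section
/- Let L : C → ℝ be a convex differentiable function on the ℓ1 ball C = {x ∈ ℝ^p : ‖x‖₁ ≤ γ} with minimizer x* ∈ C. Suppose an approximate gradient oracle ∇̃L satisfies sup_{x ∈ C} ‖∇̃L(x) − ∇L(x)‖_∞ ≤ ε/(4γ), and sup_{x ∈ C} ‖∇̃L(x)‖₂ ≤ L₀. Consider projected gradient descent x^{t+1} = P_C(x^t − η ∇̃L(x^t)) starting from x¹ ∈ C with step size η = 2γ/(L₀√T). Then after T = ⌈16 γ² L₀² / ε²⌉ iterations, the averaged iterate x̄^T = (1/T) Σ_{t=1}^T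 x^t satisfies L(x̄^T) − L(x*) ≤ ε. -/
/-!
Convexity bounds the excess loss of each iterate by the oracle's linearization
`⟪g̃ₜ, xₜ - x*⟫` plus a bias term, which Hölder's inequality (`ℓ∞` error against the `ℓ1`
diameter `2γ` of the ball) caps at `ε / 2`. Projection onto a convex set is nonexpansive, so
expanding `‖xₜ - η g̃ₜ - x*‖²` makes the linearizations telescope: their sum is at most
`(‖x₁ - x*‖² + T η² L₀²) / (2η) ≤ 2γ L₀ √T`. Jensen's inequality passes the averaged bound to the
averaged iterate, and the choice of `T` makes `2γ L₀ / √T ≤ ε / 2`.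
-/

open Finset

theorem ConvexOn.sub_le_inner_of_hasGradientAt {E : Type*} [NormedAddCommGroup E]
    [InnerProductSpace ℝ E] [CompleteSpace E] {s : Set E} {f : E → ℝ} (hf : ConvexOn ℝ s f)
    {g x y : E} (hg : HasGradientAt f g x) (hx : x ∈ s) (hy : y ∈ s) :
    f x - f y ≤ inner ℝ g (x - y) := by
  have hline : HasDerivAt (f ∘ AffineMap.lineMap (k := ℝ) x y) (inner ℝ g (y - x)) 0 := by
    have hfd : HasFDerivAt f (InnerProductSpace.toDual ℝ E g) (AffineMap.lineMap x y (0 : ℝ)) := by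
      simpa using hg.hasFDerivAt
    simpa using hfd.comp_hasDerivAt (0 : ℝ) AffineMap.hasDerivAt_lineMap
  have hslope := (hf.comp_affineMap (AffineMap.lineMap (k := ℝ) x y)).le_slope_of_hasDerivAt
    (by simpa using hx) (by simpa using hy) zero_lt_one hline
  simp only [slope_def_field, Function.comp_apply, AffineMap.lineMap_apply_one,
    AffineMap.lineMap_apply_zero, sub_zero, div_one] at hslope
  have hsub : inner ℝ g (x - y) = - inner ℝ g (y - x) := by rw [← inner_neg_right, neg_sub]
  linarith

theorem ConvexOn.map_inv_card_smul_sum_sub_le {E ι : Type*} [AddCommGroup E] [Module ℝ E]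
    {s : Set E} {f : E → ℝ} (hf : ConvexOn ℝ s f) {t : Finset ι} (ht : t.Nonempty) {x : ι → E}
    (hx : ∀ i ∈ t, x i ∈ s) {c ε : ℝ} (hsum : ∑ i ∈ t, (f (x i) - c) ≤ #t * ε) :
    f ((#t : ℝ)⁻¹ • ∑ i ∈ t, x i) - c ≤ ε := by
  have hcard : (0 : ℝ) < #t := by exact_mod_cast ht.card_pos
  have hjensen := hf.map_sum_le (w := fun _ => (#t : ℝ)⁻¹) (fun _ _ => by positivity)
    (by simp [hcard.ne']) hx
  simp only [← smul_sum, smul_eq_mul, ← mul_sum] at hjensen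
  rw [sum_sub_distrib, sum_const, nsmul_eq_mul] at hsum
  have hmean : (#t : ℝ)⁻¹ * ∑ i ∈ t, f (x i) ≤ c + ε := by
    rw [inv_mul_le_iff₀ hcard]; linarith
  linarith

section Projection

variable {E : Type*} [NormedAddCommGroup E] [InnerProductSpace ℝ E] {K : Set E}

theorem Convex.norm_sub_le_of_isNearest (hK : Convex ℝ K) {q y z : E} (hq : q ∈ K)
    (hnear : ∀ w ∈ K, ‖q - y‖ ≤ ‖w - y‖) (hz : z ∈ K) : ‖q - z‖ ≤ ‖y - z‖ := by
  have hinf : ‖y - q‖ = ⨅ w : K, ‖y - w‖ := by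
    have : Nonempty K := ⟨⟨q, hq⟩⟩
    refine le_antisymm (le_ciInf fun w => ?_)
      (ciInf_le (f := fun w : K => ‖y - w‖) ⟨0, ?_⟩ ⟨q, hq⟩)
    · simpa only [norm_sub_rev y] using hnear w w.2
    · rintro _ ⟨w, rfl⟩; exact norm_nonneg _
  have hvar : inner ℝ (y - q) (z - q) ≤ 0 :=
    (norm_eq_iInf_iff_real_inner_le_zero hK hq).1 hinf z hz
  have hexpand : ‖y - z‖ ^ 2 = ‖y - q‖ ^ 2 - 2 * inner ℝ (y - q) (z - q) + ‖q - z‖ ^ 2 := by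
    rw [norm_sub_rev q z, ← norm_sub_sq_real, sub_sub_sub_cancel_right]
  refine (sq_le_sq₀ (norm_nonneg _) (norm_nonneg _)).1 ?_
  linarith [sq_nonneg ‖y - q‖]

theorem Convex.two_mul_inner_le_of_isNearest_sub_smul (hK : Convex ℝ K) {q x g z : E} {η : ℝ}
    (hq : q ∈ K) (hnear : ∀ w ∈ K, ‖q - (x - η • g)‖ ≤ ‖w - (x - η • g)‖) (hz : z ∈ K) :
    2 * η * inner ℝ g (x - z) ≤ ‖x - z‖ ^ 2 - ‖q - z‖ ^ 2 + η ^ 2 * ‖g‖ ^ 2 := by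
  have hexpand :
      ‖x - η • g - z‖ ^ 2 = ‖x - z‖ ^ 2 - 2 * η * inner ℝ g (x - z) + η ^ 2 * ‖g‖ ^ 2 := by
    rw [show x - η • g - z = (x - z) - η • g by abel, norm_sub_sq_real, real_inner_smul_right,
      real_inner_comm, norm_smul, mul_pow, Real.norm_eq_abs, sq_abs]
    ring
  have hcontract :=
    pow_le_pow_left₀ (norm_nonneg _) (hK.norm_sub_le_of_isNearest hq hnear hz) 2
  linarith

variable {P : E → E} {η : ℝ} {x g : ℕ → E} {z : E}

theorem Convex.two_mul_sum_inner_le_of_projected_iterates (hK : Convex ℝ K)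
    (hPmem : ∀ y, P y ∈ K) (hPnear : ∀ y, ∀ w ∈ K, ‖P y - y‖ ≤ ‖w - y‖)
    (hrec : ∀ t, x (t + 1) = P (x t - η • g t)) (hz : z ∈ K) (T : ℕ) :
    2 * η * ∑ t ∈ Icc 1 T, inner ℝ (g t) (x t - z) ≤
      ‖x 1 - z‖ ^ 2 - ‖x (T + 1) - z‖ ^ 2 + η ^ 2 * ∑ t ∈ Icc 1 T, ‖g t‖ ^ 2 := by
  induction T with
  | zero => simp
  | succ T ih =>
    have hstep := hK.two_mul_inner_le_of_isNearest_sub_smul (hrec (T + 1) ▸ hPmem _)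
      (hrec (T + 1) ▸ hPnear _) hz
    rw [sum_Icc_succ_top (by omega), sum_Icc_succ_top (by omega)]
    linarith

theorem Convex.two_mul_sum_sub_le_of_projected_iterates (hK : Convex ℝ K)
    (hPmem : ∀ y, P y ∈ K) (hPnear : ∀ y, ∀ w ∈ K, ‖P y - y‖ ≤ ‖w - y‖)
    (hrec : ∀ t, x (t + 1) = P (x t - η • g t)) (hz : z ∈ K) {f : E → ℝ} {T : ℕ} {D B δ : ℝ}
    (hstart : ‖x 1 - z‖ ≤ D) (hg : ∀ t ∈ Icc 1 T, ‖g t‖ ≤ B)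
    (hlin : ∀ t ∈ Icc 1 T, f (x t) - f z ≤ inner ℝ (g t) (x t - z) + δ) (hη : 0 ≤ η) :
    2 * η * ∑ t ∈ Icc 1 T, (f (x t) - f z) ≤ D ^ 2 + T * η ^ 2 * B ^ 2 + 2 * η * T * δ := by
  have hregret := hK.two_mul_sum_inner_le_of_projected_iterates hPmem hPnear hrec hz T
  have hsum : ∑ t ∈ Icc 1 T, (f (x t) - f z) ≤ ∑ t ∈ Icc 1 T, inner ℝ (g t) (x t - z) + T * δ :=
    by simpa [sum_add_distrib] using sum_le_sum hlin
  have hgrads : ∑ t ∈ Icc 1 T, ‖g t‖ ^ 2 ≤ T * B ^ 2 := by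
    simpa using sum_le_sum fun t ht => pow_le_pow_left₀ (norm_nonneg _) (hg t ht) 2
  nlinarith [pow_le_pow_left₀ (norm_nonneg _) hstart 2, sq_nonneg ‖x (T + 1) - z‖,
    mul_le_mul_of_nonneg_left hgrads (sq_nonneg η), mul_le_mul_of_nonneg_left hsum hη]

end Projection

namespace EuclideanSpace

variable {ι : Type*} [Fintype ι]

theorem convex_setOf_sum_abs_le (γ : ℝ) :
    Convex ℝ {x : EuclideanSpace ℝ ι | ∑ i, |x i| ≤ γ} := by
  intro u hu v hv a b ha hb hab
  calc ∑ i, |a * u i + b * v i| ≤ ∑ i, (a * |u i| + b * |v i|) := by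
        gcongr with i
        exact (abs_add_le _ _).trans_eq
          (by rw [abs_mul, abs_mul, abs_of_nonneg ha, abs_of_nonneg hb])
    _ = a * ∑ i, |u i| + b * ∑ i, |v i| := by rw [sum_add_distrib, mul_sum, mul_sum]
    _ ≤ a * γ + b * γ := by gcongr <;> assumption
    _ = γ := by rw [← add_mul, hab, one_mul]

theorem sum_abs_sub_le_two_mul {v w : EuclideanSpace ℝ ι} {γ : ℝ} (hv : ∑ i, |v i| ≤ γ)
    (hw : ∑ i, |w i| ≤ γ) : ∑ i, |v i - w i| ≤ 2 * γ := by
  have := sum_le_sum fun i (_ : i ∈ univ) => abs_sub (v i) (w i)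
  rw [sum_add_distrib] at this
  linarith

theorem norm_le_sum_abs (v : EuclideanSpace ℝ ι) : ‖v‖ ≤ ∑ i, |v i| := by
  rw [EuclideanSpace.norm_eq, Real.sqrt_le_left (sum_nonneg fun i _ => abs_nonneg _)]
  simpa only [Real.norm_eq_abs, sq_abs] using
    sum_sq_le_sq_sum_of_nonneg (s := univ) fun i _ => abs_nonneg (v i)

theorem inner_le_mul_sum_abs {u v : EuclideanSpace ℝ ι} {a : ℝ} (hu : ∀ i, |u i| ≤ a) :
    inner ℝ u v ≤ a * ∑ i, |v i| := by
  rw [PiLp.inner_apply, mul_sum]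
  refine sum_le_sum fun i _ => ?_
  calc inner ℝ (u i) (v i) ≤ |u i * v i| := by
        simpa [mul_comm] using le_abs_self (u i * v i)
    _ ≤ a * |v i| := by rw [abs_mul]; exact mul_le_mul_of_nonneg_right (hu i) (abs_nonneg _)

end EuclideanSpace

theorem ConvexOn.sub_le_inner_add_of_abs_sub_le {ι : Type*} [Fintype ι]
    {s : Set (EuclideanSpace ℝ ι)} {f : EuclideanSpace ℝ ι → ℝ} (hf : ConvexOn ℝ s f)
    {g g' x y : EuclideanSpace ℝ ι} (hg : HasGradientAt f g x) (hx : x ∈ s) (hy : y ∈ s)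
    {δ D : ℝ} (herr : ∀ i, |g' i - g i| ≤ δ) (hδ : 0 ≤ δ) (hxy : ∑ i, |x i - y i| ≤ D) :
    f x - f y ≤ inner ℝ g' (x - y) + δ * D :=
  calc f x - f y ≤ inner ℝ g (x - y) := hf.sub_le_inner_of_hasGradientAt hg hx hy
    _ = inner ℝ g' (x - y) + inner ℝ (g - g') (x - y) := by
        rw [← inner_add_left, add_sub_cancel]
    _ ≤ inner ℝ g' (x - y) + δ * ∑ i, |x i - y i| := by
        gcongr
        exact EuclideanSpace.inner_le_mul_sum_abs fun i => (abs_sub_comm _ _).trans_le (herr i)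
    _ ≤ inner ℝ g' (x - y) + δ * D := by gcongr

theorem sq_add_mul_sq_le_of_eq_ceil {γ ε L₀ : ℝ} (hγ : 0 < γ) (hε : 0 < ε) (hL₀ : 0 < L₀)
    {T : ℕ} (hT : T = ⌈16 * γ ^ 2 * L₀ ^ 2 / ε ^ 2⌉₊) {η : ℝ} (hη : η = 2 * γ / (L₀ * √T)) :
    (2 * γ) ^ 2 + T * η ^ 2 * L₀ ^ 2 ≤ η * T * ε := by
  have hT0 : (0 : ℝ) < T := by
    rw [hT, Nat.cast_pos, Nat.ceil_pos]; positivity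
  have hsqrt : 0 < √(T : ℝ) := Real.sqrt_pos.2 hT0
  have hsq : √(T : ℝ) ^ 2 = T := Real.sq_sqrt hT0.le
  have hηL : η * L₀ * √T = 2 * γ := by rw [hη]; field_simp
  have hη0 : 0 < η := by rw [hη]; positivity
  -- the choice of `T` is exactly `4 γ L₀ ≤ ε √T`
  have hceil : 4 * γ * L₀ ≤ ε * √T := by
    have hT' : (4 * γ * L₀ / ε) ^ 2 ≤ √(T : ℝ) ^ 2 :=
      calc (4 * γ * L₀ / ε) ^ 2 = 16 * γ ^ 2 * L₀ ^ 2 / ε ^ 2 := by ring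
        _ ≤ √(T : ℝ) ^ 2 := by rw [hsq, hT]; exact Nat.le_ceil _
    have := (sq_le_sq₀ (by positivity) hsqrt.le).1 hT'
    rw [div_le_iff₀ hε] at this
    linarith
  have hstep : 2 * η * L₀ ^ 2 ≤ ε :=
    le_of_mul_le_mul_right (by linear_combination 2 * L₀ * hηL + hceil) hsqrt
  calc (2 * γ) ^ 2 + T * η ^ 2 * L₀ ^ 2 = η * T * (2 * η * L₀ ^ 2) := by
        rw [← hηL, mul_pow, hsq]; ring
    _ ≤ η * T * ε := by gcongr

open Finset in
theorem projected_gd_robust_general (p : ℕ) (γ ε L₀ : ℝ) (hγ : 0 < γ) (hε : 0 < ε) (hL₀ : 0 < L₀)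
    (L : EuclideanSpace ℝ (Fin p) → ℝ)
    (C : Set (EuclideanSpace ℝ (Fin p)))
    (hC : C = {x | ∑ i, |x i| ≤ γ})
    (hconv : ConvexOn ℝ C L)
    (G Gt : EuclideanSpace ℝ (Fin p) → EuclideanSpace ℝ (Fin p))
    (hgrad : ∀ x ∈ C, HasGradientAt L (G x) x)
    (herr : ∀ x ∈ C, ∀ i, |Gt x i - G x i| ≤ ε / (4 * γ))
    (hGtbound : ∀ x ∈ C, ‖Gt x‖ ≤ L₀)
    (xstar : EuclideanSpace ℝ (Fin p)) (hxstarC : xstar ∈ C)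
    (T : ℕ) (hT : T = ⌈16 * γ ^ 2 * L₀ ^ 2 / ε ^ 2⌉₊)
    (η : ℝ) (hη : η = 2 * γ / (L₀ * Real.sqrt T))
    (P : EuclideanSpace ℝ (Fin p) → EuclideanSpace ℝ (Fin p))
    (hPmem : ∀ y, P y ∈ C)
    (hPproj : ∀ y, ∀ z ∈ C, ‖P y - y‖ ≤ ‖z - y‖)
    (x : ℕ → EuclideanSpace ℝ (Fin p))
    (hx1 : x 1 ∈ C)
    (hrec : ∀ t, x (t + 1) = P (x t - η • Gt (x t))) :
    L ((T : ℝ)⁻¹ • ∑ t ∈ Finset.Icc 1 T, x t) - L xstar ≤ ε := by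
  have hdist : ∀ v ∈ C, ∑ i, |v i - xstar i| ≤ 2 * γ := by
    rw [hC] at hxstarC ⊢
    exact fun v hv => EuclideanSpace.sum_abs_sub_le_two_mul hv hxstarC
  have hxC : ∀ t ∈ Icc 1 T, x t ∈ C := by
    rintro (_ | t) ht
    · simp at ht
    · exact hrec t ▸ hPmem _
  have hT0 : 0 < T := by rw [hT, Nat.ceil_pos]; positivity
  have hη0 : 0 < η := by
    have : 0 < √(T : ℝ) := Real.sqrt_pos.2 (by exact_mod_cast hT0)
    rw [hη]; positivity
  have hexcess : ∀ t ∈ Icc 1 T,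
      L (x t) - L xstar ≤ inner ℝ (Gt (x t)) (x t - xstar) + ε / 2 := by
    intro t ht
    convert hconv.sub_le_inner_add_of_abs_sub_le (hgrad _ (hxC t ht)) (hxC t ht) hxstarC
      (herr _ (hxC t ht)) (by positivity) (hdist _ (hxC t ht)) using 2
    field_simp; ring
  have hsum : ∑ t ∈ Icc 1 T, (L (x t) - L xstar) ≤ T * ε := by
    refine le_of_mul_le_mul_left ?_ (by positivity : 0 < 2 * η)
    have hK : Convex ℝ C := hC ▸ EuclideanSpace.convex_setOf_sum_abs_le γ
    linarith [hK.two_mul_sum_sub_le_of_projected_iterates hPmem hPproj hrec hxstarC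
      ((EuclideanSpace.norm_le_sum_abs _).trans (hdist _ hx1))
      (fun t ht => hGtbound _ (hxC t ht)) hexcess hη0.le,
      sq_add_mul_sq_le_of_eq_ceil hγ hε hL₀ hT hη]
  have hcard : #(Icc 1 T) = T := by simp
  have havg := hconv.map_inv_card_smul_sum_sub_le (nonempty_Icc.2 hT0) hxC (by rwa [hcard])
  rwa [hcard] at havg

open Finset in
/-- Robustness of projected gradient descent on the ℓ1 ball: with an approximate gradient
oracle of ℓ∞ error at most `ε/(4γ)` and ℓ2 norm at most `L₀`, step size `η = 2γ/(L₀√T)`,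
after `T = ⌈16γ²L₀²/ε²⌉` iterations the averaged iterate is `ε`-optimal. -/
theorem projected_gd_robust (p : ℕ) (γ ε L₀ : ℝ) (hγ : 0 < γ) (hε : 0 < ε) (hL₀ : 0 < L₀)
    (L : EuclideanSpace ℝ (Fin p) → ℝ)
    (C : Set (EuclideanSpace ℝ (Fin p)))
    (hC : C = {x | ∑ i, |x i| ≤ γ})
    (hconv : ConvexOn ℝ C L)
    (G Gt : EuclideanSpace ℝ (Fin p) → EuclideanSpace ℝ (Fin p))
    (hgrad : ∀ x ∈ C, HasGradientAt L (G x) x)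
    (herr : ∀ x ∈ C, ∀ i, |Gt x i - G x i| ≤ ε / (4 * γ))
    (hGtbound : ∀ x ∈ C, ‖Gt x‖ ≤ L₀)
    (xstar : EuclideanSpace ℝ (Fin p)) (hxstarC : xstar ∈ C)
    (hmin : ∀ z ∈ C, L xstar ≤ L z)
    (T : ℕ) (hT : T = ⌈16 * γ ^ 2 * L₀ ^ 2 / ε ^ 2⌉₊)
    (η : ℝ) (hη : η = 2 * γ / (L₀ * Real.sqrt T))
    (P : EuclideanSpace ℝ (Fin p) → EuclideanSpace ℝ (Fin p))
    (hPmem : ∀ y, P y ∈ C)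
    (hPproj : ∀ y, ∀ z ∈ C, ‖P y - y‖ ≤ ‖z - y‖)
    (x : ℕ → EuclideanSpace ℝ (Fin p))
    (hx1 : x 1 ∈ C)
    (hrec : ∀ t, x (t + 1) = P (x t - η • Gt (x t))) :
    L ((T : ℝ)⁻¹ • ∑ t ∈ Finset.Icc 1 T, x t) - L xstar ≤ ε :=
  projected_gd_robust_general p γ ε L₀ hγ hε hL₀ L C hC hconv G Gt hgrad herr hGtbound xstar hxstarC
    T hT η hη P hPmem hPproj x hx1 hrec
end

section
/- Let μ be an Ising Gibbs measure on {-1,1}^p with ℓ1-width at most γ, and let Δ ∈ ℝ^p with coordinates (Δ_u, (Δ_{u,k})_{k≠u}). Then E_μ[(Σ_{k≠u} σ_k Δ_{u,k} + Δ_u)²] ≥ e^{-2γ} · max_{v≠u} Δ_{u,v}². -/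
lemma flip_quad {p : ℕ} (θ : Fin p → Fin p → ℝ) (θf : Fin p → ℝ)
    (hsym : ∀ a b, θ a b = θ b a) (hdiag : ∀ a, θ a a = 0)
    (v : Fin p) (τ : Fin p → ℝ) :
    (1/2 : ℝ) * (∑ a, ∑ b, θ a b * Function.update τ v (-(τ v)) a * Function.update τ v (-(τ v)) b)
      + ∑ a, θf a * Function.update τ v (-(τ v)) a
    = ((1/2 : ℝ) * (∑ a, ∑ b, θ a b * τ a * τ b) + ∑ a, θf a * τ a)
      - 2 * τ v * ((∑ k, θ v k * τ k) + θf v) := by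
  have key : ∀ a b : Fin p, θ a b * Function.update τ v (-(τ v)) a * Function.update τ v (-(τ v)) b
      = θ a b * τ a * τ b - (if a = v then 2*(θ a b * τ a * τ b) else 0)
        - (if b = v then 2*(θ a b * τ a * τ b) else 0)
        + (if a = v then (if b = v then 4*(θ a b * τ a * τ b) else 0) else 0) := by
    intro a b
    rcases eq_or_ne a v with ha | ha <;> rcases eq_or_ne b v with hb | hb <;>
      simp [ha, hb, Function.update_apply] <;> ring
  have keyl : ∀ a : Fin p, θf a * Function.update τ v (-(τ v)) a
      = θf a * τ a - (if a = v then 2 * (θf a * τ a) else 0) := by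
    intro a
    rcases eq_or_ne a v with ha | ha <;> simp [ha, Function.update_apply] <;> ring
  simp only [key, keyl, Finset.sum_sub_distrib, Finset.sum_add_distrib,
    Finset.sum_ite_eq', Finset.mem_univ, if_true]
  have h1 : ∑ a : Fin p, 2 * (θ a v * τ a * τ v) = 2 * τ v * ∑ a : Fin p, θ v a * τ a := by
    rw [Finset.mul_sum]
    refine Finset.sum_congr rfl fun a _ => ?_
    rw [hsym]; ring
  have h2 : ∑ b : Fin p, 2 * (θ v b * τ v * τ b) = 2 * τ v * ∑ b : Fin p, θ v b * τ b := by
    rw [Finset.mul_sum]; exact Finset.sum_congr rfl fun b _ => by ring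
  have hpull : ∀ (f : Fin p → Fin p → ℝ) (x : Fin p),
      ∑ x1 : Fin p, (if x = v then f x x1 else 0) = if x = v then ∑ x1 : Fin p, f x x1 else 0 := by
    intro f x; split <;> simp
  have h3 : ∑ x : Fin p, ∑ x1 : Fin p, (if x = v then 2 * (θ x x1 * τ x * τ x1) else 0)
      = 2 * τ v * ∑ b : Fin p, θ v b * τ b := by
    calc ∑ x : Fin p, ∑ x1 : Fin p, (if x = v then 2 * (θ x x1 * τ x * τ x1) else 0)
        = ∑ x : Fin p, (if x = v then ∑ x1 : Fin p, 2 * (θ x x1 * τ x * τ x1) else 0) :=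
          Finset.sum_congr rfl fun x _ => hpull (fun x x1 => 2 * (θ x x1 * τ x * τ x1)) x
      _ = ∑ x1 : Fin p, 2 * (θ v x1 * τ v * τ x1) := by rw [Finset.sum_ite_eq']; simp
      _ = _ := h2
  have h4 : ∑ x : Fin p, ∑ x1 : Fin p,
      (if x = v then (if x1 = v then 4 * (θ x x1 * τ x * τ x1) else 0) else 0) = 0 := by
    calc ∑ x : Fin p, ∑ x1 : Fin p, (if x = v then (if x1 = v then 4 * (θ x x1 * τ x * τ x1) else 0) else 0)
        = ∑ x : Fin p, (if x = v then ∑ x1 : Fin p, (if x1 = v then 4 * (θ x x1 * τ x * τ x1) else 0) else 0) :=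
          Finset.sum_congr rfl fun x _ => hpull (fun x x1 => if x1 = v then 4 * (θ x x1 * τ x * τ x1) else 0) x
      _ = ∑ x1 : Fin p, (if x1 = v then 4 * (θ v x1 * τ v * τ x1) else 0) := by
          rw [Finset.sum_ite_eq']; simp
      _ = 0 := by rw [Finset.sum_ite_eq']; simp [hdiag]
  rw [h3, h4, h1]
  ring



open Finset in
/-- For an Ising Gibbs measure `μ` of ℓ1-width at most `γ` and any `Δ ∈ ℝ^p`,
`E_μ[(∑_{k≠u} σ_k Δ_k + Δ_u)²] ≥ e^{-2γ} · Δ_v²` for every `v ≠ u`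
(hence at least `e^{-2γ} · max_{v≠u} Δ_v²`). -/
theorem ising_second_moment_lower_bound (p : ℕ) (γ : ℝ) (hγ : 0 < γ)
    (θ : Fin p → Fin p → ℝ) (θf : Fin p → ℝ)
    (hsym : ∀ u v, θ u v = θ v u) (hdiag : ∀ u, θ u u = 0)
    (hwidth : ∀ u, (∑ v ∈ univ.erase u, |θ u v|) + |θf u| ≤ γ)
    (sp : Bool → ℝ) (hsp : sp = fun b => if b then 1 else -1)
    (H : (Fin p → ℝ) → ℝ)
    (hH : H = fun τ => (1 / 2) * ∑ u, ∑ v, θ u v * τ u * τ v + ∑ u, θf u * τ u)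
    (μ : (Fin p → Bool) → ℝ)
    (hμ : μ = fun c => Real.exp (H (fun i => sp (c i))) /
      ∑ c' : Fin p → Bool, Real.exp (H (fun i => sp (c' i))))
    (u : Fin p) (Δ : Fin p → ℝ) :
    ∀ v, v ≠ u →
      (∑ c, μ c * ((∑ k ∈ univ.erase u, sp (c k) * Δ k) + Δ u) ^ 2) ≥
        Real.exp (-(2 * γ)) * (Δ v) ^ 2 := by

  intro v hvu
  have hspabs : ∀ b, |sp b| = 1 := by intro b; rw [hsp]; cases b <;> norm_num
  have hspsq : ∀ b, sp b ^ 2 = 1 := by intro b; rw [hsp]; cases b <;> norm_num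
  have hspnot : ∀ b, sp (!b) = - sp b := by intro b; rw [hsp]; cases b <;> norm_num
  set e : ℝ := Real.exp (-(2 * γ)) with he
  set X : (Fin p → Bool) → ℝ := fun c => (∑ k ∈ univ.erase u, sp (c k) * Δ k) + Δ u with hX
  set E : (Fin p → Bool) → ℝ := fun c => Real.exp (H (fun i => sp (c i))) with hE
  set Z : ℝ := ∑ c' : Fin p → Bool, E c' with hZ
  have hEpos : ∀ c, 0 < E c := fun c => Real.exp_pos _
  have hZpos : 0 < Z := Finset.sum_pos (fun c _ => hEpos c) univ_nonempty
  have hepos : 0 < e := Real.exp_pos _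
  have hele : e ≤ 1 := Real.exp_le_one_iff.2 (by linarith)
  set flip : (Fin p → Bool) → (Fin p → Bool) := fun c => Function.update c v (!(c v)) with hflip
  have hflipne : ∀ c i, i ≠ v → flip c i = c i := by
    intro c i h; simp [hflip, Function.update_apply, h]
  have hflipv : ∀ c, flip c v = !(c v) := by intro c; simp [hflip]
  have hinv : Function.Involutive flip := by
    intro c; funext i
    rcases eq_or_ne i v with h | h
    · subst h; rw [hflipv, hflipv, Bool.not_not]
    · rw [hflipne _ i h, hflipne _ i h]
  -- energy comparison under a flip
  have hEflip : ∀ c, e * E c ≤ E (flip c) := by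
    intro c
    have hup : (fun i => sp (flip c i)) = Function.update (fun i => sp (c i)) v (-(sp (c v))) := by
      funext i
      rcases eq_or_ne i v with h | h
      · subst h; rw [Function.update_self, hflipv, hspnot]
      · simp only [Function.update_apply, if_neg h, hflipne c i h]
    have hHeq : H (fun i => sp (flip c i)) =
        H (fun i => sp (c i)) - 2 * sp (c v) * ((∑ k, θ v k * sp (c k)) + θf v) := by
      rw [hup, hH]
      exact flip_quad θ θf hsym hdiag v (fun i => sp (c i))
    have hT : |(∑ k, θ v k * sp (c k)) + θf v| ≤ γ := by
      have h1 : (∑ k, θ v k * sp (c k)) = ∑ k ∈ univ.erase v, θ v k * sp (c k) := by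
        rw [← Finset.sum_erase_add univ _ (Finset.mem_univ v), hdiag]
        simp
      calc |(∑ k, θ v k * sp (c k)) + θf v|
          ≤ |∑ k ∈ univ.erase v, θ v k * sp (c k)| + |θf v| := by rw [h1]; exact abs_add_le _ _
        _ ≤ (∑ k ∈ univ.erase v, |θ v k * sp (c k)|) + |θf v| := by
            gcongr; exact Finset.abs_sum_le_sum_abs _ _
        _ = (∑ k ∈ univ.erase v, |θ v k|) + |θf v| := by
            congr 1; refine Finset.sum_congr rfl fun k _ => ?_
            rw [abs_mul, hspabs, mul_one]
        _ ≤ γ := hwidth v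
    have habs : |2 * sp (c v) * ((∑ k, θ v k * sp (c k)) + θf v)| ≤ 2 * γ := by
      rw [abs_mul, abs_mul, abs_two, hspabs, mul_one]
      linarith
    have hle := le_abs_self (2 * sp (c v) * ((∑ k, θ v k * sp (c k)) + θf v))
    calc e * E c = Real.exp (H (fun i => sp (c i)) + (-(2*γ))) := by
          rw [hE]; simp only []; rw [Real.exp_add]; ring
      _ ≤ Real.exp (H (fun i => sp (c i)) - 2 * sp (c v) * ((∑ k, θ v k * sp (c k)) + θf v)) :=
          Real.exp_le_exp.2 (by linarith)
      _ = E (flip c) := by rw [hE]; simp only []; rw [hHeq]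
  -- X under a flip
  have hXflip : ∀ c, X (flip c) = X c - 2 * sp (c v) * Δ v := by
    intro c
    have hv : v ∈ univ.erase u := Finset.mem_erase.2 ⟨hvu, Finset.mem_univ v⟩
    simp only [hX]
    have h2 : ∑ k ∈ (univ.erase u).erase v, sp (flip c k) * Δ k
        = ∑ k ∈ (univ.erase u).erase v, sp (c k) * Δ k :=
      Finset.sum_congr rfl fun k hk => by rw [hflipne c k (Finset.mem_erase.1 hk).1]
    rw [← Finset.sum_erase_add _ _ hv, ← Finset.sum_erase_add (univ.erase u) (fun k => sp (c k) * Δ k) hv,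
      h2, hflipv, hspnot]
    ring
  -- pairwise inequality
  have hkey : ∀ c, e * (E c + E (flip c)) * Δ v ^ 2 ≤ E c * X c ^ 2 + E (flip c) * X (flip c) ^ 2 := by
    intro c
    have h1 := hEflip c
    have h2 : e * E (flip c) ≤ E c := by
      have h3 := hEflip (flip c); rwa [hinv c] at h3
    have hd : X c - X (flip c) = 2 * sp (c v) * Δ v := by rw [hXflip]; ring
    have habs : (X c - X (flip c)) ^ 2 = 4 * Δ v ^ 2 := by
      rw [hd]
      have := hspsq (c v)
      nlinarith [hspsq (c v)]
    have hprod : e * (E c + E (flip c)) * (X c - X (flip c)) ^ 2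
        = e * (E c + E (flip c)) * (4 * Δ v ^ 2) := by rw [habs]
    have hm1 : e * (E c + E (flip c)) ≤ 2 * E c := by nlinarith [hEpos c, hEpos (flip c)]
    have hm2 : e * (E c + E (flip c)) ≤ 2 * E (flip c) := by nlinarith [hEpos c, hEpos (flip c)]
    nlinarith [mul_nonneg (by linarith : (0:ℝ) ≤ 2 * E c - e * (E c + E (flip c))) (sq_nonneg (X c)),
      mul_nonneg (by linarith : (0:ℝ) ≤ 2 * E (flip c) - e * (E c + E (flip c))) (sq_nonneg (X (flip c))),
      mul_nonneg (mul_nonneg hepos.le (by positivity : (0:ℝ) ≤ E c + E (flip c))) (sq_nonneg (X c + X (flip c))),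
      hprod]
  -- sum it up
  have hsum1 : ∑ c, E (flip c) * X (flip c) ^ 2 = ∑ c, E c * X c ^ 2 :=
    Fintype.sum_bijective flip hinv.bijective _ _ (fun _ => rfl)
  have hsum2 : ∑ c, E (flip c) = Z := by
    rw [hZ]; exact Fintype.sum_bijective flip hinv.bijective _ _ (fun _ => rfl)
  have hmain : e * Δ v ^ 2 * Z ≤ ∑ c, E c * X c ^ 2 := by
    have h := Finset.sum_le_sum (fun c (_ : c ∈ univ) => hkey c)
    have hL : ∑ c, e * (E c + E (flip c)) * Δ v ^ 2 = e * (Z + Z) * Δ v ^ 2 := by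
      calc ∑ c, e * (E c + E (flip c)) * Δ v ^ 2
          = (∑ c, (e * Δ v ^ 2) * E c) + ∑ c, (e * Δ v ^ 2) * E (flip c) := by
            rw [← Finset.sum_add_distrib]; exact Finset.sum_congr rfl fun c _ => by ring
        _ = e * (Z + Z) * Δ v ^ 2 := by
            rw [← Finset.mul_sum, ← Finset.mul_sum, hsum2, ← hZ]; ring
    have hR : ∑ c, (E c * X c ^ 2 + E (flip c) * X (flip c) ^ 2) = 2 * ∑ c, E c * X c ^ 2 := by
      rw [Finset.sum_add_distrib, hsum1]; ring
    rw [hL, hR] at h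
    linarith
  have hgoal : (∑ c, μ c * ((∑ k ∈ univ.erase u, sp (c k) * Δ k) + Δ u) ^ 2)
      = (∑ c, E c * X c ^ 2) / Z := by
    rw [Finset.sum_div]
    refine Finset.sum_congr rfl fun c _ => ?_
    rw [hμ]
    simp only [hE, hX, hZ]
    ring
  rw [hgoal, ge_iff_le, le_div_iff₀ hZpos]
  linarith
end
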